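/- Let C₁, C₂ be channels from finite sets X₁, X₂ to finite trace sets Y₁, Y₂ respectively, let π be a prior on X₁×X₂, and let Obs be any observer on Int(Y₁,Y₂). Then there exists a scheduler S* on Y₁, Y₂ that minimises the observed min-entropy leakage of the scheduled composition: for every scheduler S on Y₁, Y₂, L(π, Comp_{S*}(C₁,C₂)·Obs) ≤ L(π, Comp_S(C₁,C₂)·Obs); equivalently, S* minimises the observed posterior vulnerability V(π, Comp_S(C₁,C₂)·Obs) over all schedulers S. -/
import Mathlib


open scoped Classical BigOperators

noncomputable section

/-- A (row-stochastic) channel matrix whose outputs range over a finite set `Ys`. -/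
def FIsChannel {X B : Type*} (Ys : Finset B) (C : X → B → ℝ) : Prop :=
  (∀ x y, 0 ≤ C x y) ∧ ∀ x, ∑ y ∈ Ys, C x y = 1

/-- A prior (probability distribution). -/
def IsPrior {X : Type*} [Fintype X] (π : X → ℝ) : Prop :=
  (∀ x, 0 ≤ π x) ∧ ∑ x, π x = 1

/-- Cascade composition of channels (matrix product), outputs of the first ranging
over the finite set `Ys`. -/
def Fcascade {X B Z : Type*} (Ys : Finset B) (C : X → B → ℝ) (D : B → Z → ℝ) :
    X → Z → ℝ :=
  fun x z => ∑ y ∈ Ys, C x y * D y z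

/-- Mutual information (base-2), with `0`-probability terms taken to be `0`. -/
def FMI {X B : Type*} [Fintype X] (π : X → ℝ) (Ys : Finset B) (C : X → B → ℝ) : ℝ :=
  ∑ x, ∑ y ∈ Ys, if π x * C x y = 0 then 0
    else π x * C x y * Real.logb 2 (C x y / ∑ x', π x' * C x' y)

/-- Prior vulnerability. -/
def Vprior {X : Type*} [Fintype X] [Nonempty X] (π : X → ℝ) : ℝ :=
  Finset.univ.sup' Finset.univ_nonempty π

/-- Posterior vulnerability. -/
def FVpost {X B : Type*} [Fintype X] [Nonempty X]
    (π : X → ℝ) (Ys : Finset B) (C : X → B → ℝ) : ℝ :=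
  ∑ y ∈ Ys, Finset.univ.sup' Finset.univ_nonempty (fun x => π x * C x y)

/-- Min-entropy leakage. -/
def FMEL {X B : Type*} [Fintype X] [Nonempty X]
    (π : X → ℝ) (Ys : Finset B) (C : X → B → ℝ) : ℝ :=
  Real.logb 2 (FVpost π Ys C) - Real.logb 2 (Vprior π)

/-- Min-capacity: supremum of min-entropy leakage over all priors. -/
def FMinCap {X B : Type*} [Fintype X] [Nonempty X] (Ys : Finset B) (C : X → B → ℝ) : ℝ :=
  sSup {l : ℝ | ∃ π : X → ℝ, IsPrior π ∧ l = FMEL π Ys C}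

/-- All interleavings (shuffles) of two traces. -/
def interleavings {A : Type*} : List A → List A → List (List A)
  | [], ys => [ys]
  | x :: xs, [] => [x :: xs]
  | x :: xs, y :: ys =>
      ((interleavings xs (y :: ys)).map (x :: ·)) ++
        ((interleavings (x :: xs) ys).map (y :: ·))
termination_by l₁ l₂ => l₁.length + l₂.length

/-- The interleaving `Int(y₁, y₂)` of two traces, as a finite set. -/
def IntF {A : Type*} [DecidableEq A] (y₁ y₂ : List A) : Finset (List A) :=
  (interleavings y₁ y₂).toFinset

/-- The interleaving `Int(Y₁, Y₂)` of two finite sets of traces. -/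
def IntSet {A : Type*} [DecidableEq A] (Y₁ Y₂ : Finset (List A)) : Finset (List A) :=
  Y₁.biUnion fun y₁ => Y₂.biUnion fun y₂ => IntF y₁ y₂

/-- A scheduler on `Y₁`, `Y₂`: for each pair of traces it yields a probability
distribution supported on their interleavings. -/
def IsScheduler {A : Type*} [DecidableEq A] (Y₁ Y₂ : Finset (List A))
    (S : List A → List A → List A → ℝ) : Prop :=
  ∀ y₁ ∈ Y₁, ∀ y₂ ∈ Y₂,
    (∀ y, 0 ≤ S y₁ y₂ y) ∧ (∀ y, y ∉ IntF y₁ y₂ → S y₁ y₂ y = 0) ∧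
      ∑ y ∈ IntF y₁ y₂, S y₁ y₂ y = 1

/-- The scheduled composition of two channels with respect to a scheduler. -/
def Comp {A X₁ X₂ : Type*} (Y₁ Y₂ : Finset (List A))
    (C₁ : X₁ → List A → ℝ) (C₂ : X₂ → List A → ℝ)
    (S : List A → List A → List A → ℝ) : X₁ × X₂ → List A → ℝ :=
  fun x y => ∑ y₁ ∈ Y₁, ∑ y₂ ∈ Y₂, C₁ x.1 y₁ * C₂ x.2 y₂ * S y₁ y₂ y

/-- The (disjoint) parallel composition of two channels. -/
def Par {A X₁ X₂ : Type*} (C₁ : X₁ → List A → ℝ) (C₂ : X₂ → List A → ℝ) :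
    X₁ × X₂ → List A × List A → ℝ :=
  fun x y => C₁ x.1 y.1 * C₂ x.2 y.2

/-! ### Auxiliary material for the minimising-scheduler theorem -/

namespace SchedAux

variable {A : Type*} [DecidableEq A]

lemma interleavings_ne_nil : ∀ (l₁ l₂ : List A), interleavings l₁ l₂ ≠ []
  | [], ys => by simp [interleavings]
  | x :: xs, [] => by simp [interleavings]
  | x :: xs, y :: ys => by
      rw [interleavings]
      intro h
      rcases List.append_eq_nil_iff.mp h with ⟨h1, _⟩
      exact interleavings_ne_nil xs (y :: ys) (List.map_eq_nil_iff.mp h1)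
termination_by l₁ l₂ => l₁.length + l₂.length

lemma IntF_nonempty (y₁ y₂ : List A) : (IntF y₁ y₂).Nonempty := by
  obtain ⟨x, hx⟩ := List.exists_mem_of_ne_nil _ (interleavings_ne_nil y₁ y₂)
  exact ⟨x, List.mem_toFinset.mpr hx⟩

lemma mem_IntSet {Y₁ Y₂ : Finset (List A)} {y₁ y₂ y : List A}
    (h₁ : y₁ ∈ Y₁) (h₂ : y₂ ∈ Y₂) (h : y ∈ IntF y₁ y₂) : y ∈ IntSet Y₁ Y₂ := by
  simp only [IntSet, Finset.mem_biUnion]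
  exact ⟨y₁, h₁, y₂, h₂, h⟩

/-- Finite index set parametrising the relevant scheduler entries. -/
def TIdx (Y₁ Y₂ : Finset (List A)) : Finset (List A × List A × List A) :=
  Y₁ ×ˢ Y₂ ×ˢ IntSet Y₁ Y₂

lemma mem_TIdx {Y₁ Y₂ : Finset (List A)} {y₁ y₂ y : List A} :
    (y₁, y₂, y) ∈ TIdx Y₁ Y₂ ↔ y₁ ∈ Y₁ ∧ y₂ ∈ Y₂ ∧ y ∈ IntSet Y₁ Y₂ := by
  simp [TIdx, Finset.mem_product]

/-- Reconstruct a scheduler-like function from a finitely-indexed vector. -/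
def toSched (Y₁ Y₂ : Finset (List A)) (f : ↥(TIdx Y₁ Y₂) → ℝ) :
    List A → List A → List A → ℝ :=
  fun y₁ y₂ y => if h : (y₁, y₂, y) ∈ TIdx Y₁ Y₂ then f ⟨(y₁, y₂, y), h⟩ else 0

lemma toSched_apply {Y₁ Y₂ : Finset (List A)} (f : ↥(TIdx Y₁ Y₂) → ℝ)
    {y₁ y₂ y : List A} (hp : (y₁, y₂, y) ∈ TIdx Y₁ Y₂) :
    toSched Y₁ Y₂ f y₁ y₂ y = f ⟨(y₁, y₂, y), hp⟩ := dif_pos hp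

lemma continuous_toSched (Y₁ Y₂ : Finset (List A)) (y₁ y₂ y : List A) :
    Continuous (fun f : ↥(TIdx Y₁ Y₂) → ℝ => toSched Y₁ Y₂ f y₁ y₂ y) := by
  unfold toSched
  by_cases h : (y₁, y₂, y) ∈ TIdx Y₁ Y₂
  · simp only [dif_pos h]; exact continuous_apply _
  · simp only [dif_neg h]; exact continuous_const

/-- Positivity of the observed posterior vulnerability of a scheduled composition. -/
lemma FVpost_pos {X₁ X₂ Z : Type*} [Fintype X₁] [Fintype X₂]
    [Nonempty X₁] [Nonempty X₂] [Fintype Z]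
    (Y₁ Y₂ : Finset (List A))
    (C₁ : X₁ → List A → ℝ) (C₂ : X₂ → List A → ℝ)
    (hC₁ : FIsChannel Y₁ C₁) (hC₂ : FIsChannel Y₂ C₂)
    (π : X₁ × X₂ → ℝ) (hπ : IsPrior π)
    (Obs : List A → Z → ℝ)
    (hObs : (∀ y z, 0 ≤ Obs y z) ∧ ∀ y ∈ IntSet Y₁ Y₂, ∑ z, Obs y z = 1)
    (S : List A → List A → List A → ℝ) (hS : IsScheduler Y₁ Y₂ S) :
    0 < FVpost π Finset.univ (Fcascade (IntSet Y₁ Y₂) (Comp Y₁ Y₂ C₁ C₂ S) Obs) := by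
  obtain ⟨x₀, hx₀⟩ : ∃ x, 0 < π x := by
    by_contra h
    push_neg at h
    have hz : ∑ x, π x = 0 :=
      Finset.sum_eq_zero fun x _ => le_antisymm (h x) (hπ.1 x)
    rw [hπ.2] at hz; norm_num at hz
  have hrow : ∑ z, Fcascade (IntSet Y₁ Y₂) (Comp Y₁ Y₂ C₁ C₂ S) Obs x₀ z = 1 := by
    unfold Fcascade
    rw [Finset.sum_comm]
    have h1 : ∀ y ∈ IntSet Y₁ Y₂,
        ∑ z, Comp Y₁ Y₂ C₁ C₂ S x₀ y * Obs y z = Comp Y₁ Y₂ C₁ C₂ S x₀ y := by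
      intro y hy
      rw [← Finset.mul_sum, hObs.2 y hy, mul_one]
    rw [Finset.sum_congr rfl h1]
    unfold Comp
    rw [Finset.sum_comm]
    have h2 : ∀ y₁ ∈ Y₁,
        (∑ y ∈ IntSet Y₁ Y₂, ∑ y₂ ∈ Y₂, C₁ x₀.1 y₁ * C₂ x₀.2 y₂ * S y₁ y₂ y)
          = C₁ x₀.1 y₁ := by
      intro y₁ h₁
      rw [Finset.sum_comm]
      have h3 : ∀ y₂ ∈ Y₂,
          (∑ y ∈ IntSet Y₁ Y₂, C₁ x₀.1 y₁ * C₂ x₀.2 y₂ * S y₁ y₂ y)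
            = C₁ x₀.1 y₁ * C₂ x₀.2 y₂ := by
        intro y₂ h₂
        have h4 : ∑ y ∈ IntSet Y₁ Y₂, S y₁ y₂ y = ∑ y ∈ IntF y₁ y₂, S y₁ y₂ y := by
          symm
          apply Finset.sum_subset
          · intro y hy; exact mem_IntSet h₁ h₂ hy
          · intro y _ hy; exact (hS y₁ h₁ y₂ h₂).2.1 y hy
        calc ∑ y ∈ IntSet Y₁ Y₂, C₁ x₀.1 y₁ * C₂ x₀.2 y₂ * S y₁ y₂ y
            = C₁ x₀.1 y₁ * C₂ x₀.2 y₂ * ∑ y ∈ IntSet Y₁ Y₂, S y₁ y₂ y := by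
              rw [Finset.mul_sum]
          _ = C₁ x₀.1 y₁ * C₂ x₀.2 y₂ := by
              rw [h4, (hS y₁ h₁ y₂ h₂).2.2, mul_one]
      rw [Finset.sum_congr rfl h3, ← Finset.mul_sum, hC₂.2, mul_one]
    rw [Finset.sum_congr rfl h2, hC₁.2]
  have hDnn : ∀ z, 0 ≤ Fcascade (IntSet Y₁ Y₂) (Comp Y₁ Y₂ C₁ C₂ S) Obs x₀ z := by
    intro z
    apply Finset.sum_nonneg
    intro y hy
    apply mul_nonneg _ (hObs.1 y z)
    apply Finset.sum_nonneg; intro y₁ h₁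
    apply Finset.sum_nonneg; intro y₂ h₂
    exact mul_nonneg (mul_nonneg (hC₁.1 _ _) (hC₂.1 _ _)) ((hS y₁ h₁ y₂ h₂).1 y)
  calc (0 : ℝ) < π x₀ := hx₀
    _ = ∑ z, π x₀ * Fcascade (IntSet Y₁ Y₂) (Comp Y₁ Y₂ C₁ C₂ S) Obs x₀ z := by
        rw [← Finset.mul_sum, hrow, mul_one]
    _ ≤ FVpost π Finset.univ (Fcascade (IntSet Y₁ Y₂) (Comp Y₁ Y₂ C₁ C₂ S) Obs) := by
        apply Finset.sum_le_sum
        intro z _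
        exact Finset.le_sup'
          (fun x => π x * Fcascade (IntSet Y₁ Y₂) (Comp Y₁ Y₂ C₁ C₂ S) Obs x z)
          (Finset.mem_univ x₀)

end SchedAux

/-- there exists a scheduler minimising the observed min-entropy
leakage (equivalently, the observed posterior vulnerability) of the scheduled
composition, in the presence of any observer. -/
theorem exists_scheduler_minimising_observed_MEL
    {A X₁ X₂ Z : Type*} [DecidableEq A] [Fintype X₁] [Fintype X₂]
    [Nonempty X₁] [Nonempty X₂] [Fintype Z]
    (Y₁ Y₂ : Finset (List A))
    (C₁ : X₁ → List A → ℝ) (C₂ : X₂ → List A → ℝ)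
    (hC₁ : FIsChannel Y₁ C₁) (hC₂ : FIsChannel Y₂ C₂)
    (π : X₁ × X₂ → ℝ) (hπ : IsPrior π)
    (Obs : List A → Z → ℝ)
    (hObs : (∀ y z, 0 ≤ Obs y z) ∧ ∀ y ∈ IntSet Y₁ Y₂, ∑ z, Obs y z = 1) :
    ∃ Sstar, IsScheduler Y₁ Y₂ Sstar ∧
      ∀ S, IsScheduler Y₁ Y₂ S →
        FMEL π Finset.univ (Fcascade (IntSet Y₁ Y₂) (Comp Y₁ Y₂ C₁ C₂ Sstar) Obs) ≤
          FMEL π Finset.univ (Fcascade (IntSet Y₁ Y₂) (Comp Y₁ Y₂ C₁ C₂ S) Obs) ∧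
        FVpost π Finset.univ (Fcascade (IntSet Y₁ Y₂) (Comp Y₁ Y₂ C₁ C₂ Sstar) Obs) ≤
          FVpost π Finset.univ (Fcascade (IntSet Y₁ Y₂) (Comp Y₁ Y₂ C₁ C₂ S) Obs) := by
  classical
  open SchedAux in
  -- the objective, as a function of the finitely-indexed scheduler vector
  set Φ : (↥(TIdx Y₁ Y₂) → ℝ) → ℝ := fun f =>
    FVpost π Finset.univ
      (Fcascade (IntSet Y₁ Y₂) (Comp Y₁ Y₂ C₁ C₂ (toSched Y₁ Y₂ f)) Obs) with hΦdef
  set K : Set (↥(TIdx Y₁ Y₂) → ℝ) := {f | IsScheduler Y₁ Y₂ (toSched Y₁ Y₂ f)} with hKdef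
  -- continuity of the objective
  have hΦc : Continuous Φ := by
    rw [hΦdef]
    simp only [FVpost, Fcascade, Comp]
    apply continuous_finset_sum
    intro z _
    apply Continuous.finset_sup'_apply
    intro x _
    apply Continuous.mul continuous_const
    apply continuous_finset_sum
    intro y _
    apply Continuous.mul _ continuous_const
    apply continuous_finset_sum
    intro y₁ _
    apply continuous_finset_sum
    intro y₂ _
    exact continuous_const.mul (continuous_toSched Y₁ Y₂ y₁ y₂ y)
  -- K is closed
  have hKc : IsClosed K := by
    have hrw : K = ⋂ (y₁ : List A), ⋂ (_ : y₁ ∈ Y₁), ⋂ (y₂ : List A), ⋂ (_ : y₂ ∈ Y₂),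
        ((⋂ (y : List A), {f : ↥(TIdx Y₁ Y₂) → ℝ | 0 ≤ toSched Y₁ Y₂ f y₁ y₂ y}) ∩
         (⋂ (y : List A), ⋂ (_ : y ∉ IntF y₁ y₂),
            {f : ↥(TIdx Y₁ Y₂) → ℝ | toSched Y₁ Y₂ f y₁ y₂ y = 0}) ∩
         {f : ↥(TIdx Y₁ Y₂) → ℝ | ∑ y ∈ IntF y₁ y₂, toSched Y₁ Y₂ f y₁ y₂ y = 1}) := by
      ext f
      simp only [hKdef, Set.mem_setOf_eq, IsScheduler, Set.mem_iInter, Set.mem_inter_iff]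
      constructor
      · intro h y₁ h₁ y₂ h₂
        obtain ⟨a, b, c⟩ := h y₁ h₁ y₂ h₂
        exact ⟨⟨a, b⟩, c⟩
      · intro h y₁ h₁ y₂ h₂
        obtain ⟨⟨a, b⟩, c⟩ := h y₁ h₁ y₂ h₂
        exact ⟨a, b, c⟩
    rw [hrw]
    apply isClosed_iInter; intro y₁
    apply isClosed_iInter; intro _
    apply isClosed_iInter; intro y₂
    apply isClosed_iInter; intro _
    refine IsClosed.inter (IsClosed.inter ?_ ?_) ?_
    · exact isClosed_iInter fun y =>
        isClosed_le continuous_const (continuous_toSched Y₁ Y₂ y₁ y₂ y)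
    · exact isClosed_iInter fun y => isClosed_iInter fun _ =>
        isClosed_eq (continuous_toSched Y₁ Y₂ y₁ y₂ y) continuous_const
    · exact isClosed_eq
        (continuous_finset_sum _ fun y _ => continuous_toSched Y₁ Y₂ y₁ y₂ y)
        continuous_const
  -- K is contained in the unit box
  have hKsub : K ⊆ Set.Icc (0 : ↥(TIdx Y₁ Y₂) → ℝ) 1 := by
    intro f hf
    constructor
    · intro p
      obtain ⟨⟨y₁, y₂, y⟩, hp⟩ := p
      have hmem := mem_TIdx.mp hp
      have he : toSched Y₁ Y₂ f y₁ y₂ y = f ⟨(y₁, y₂, y), hp⟩ := toSched_apply f hp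
      have := (hf y₁ hmem.1 y₂ hmem.2.1).1 y
      rw [he] at this
      exact this
    · intro p
      obtain ⟨⟨y₁, y₂, y⟩, hp⟩ := p
      have hmem := mem_TIdx.mp hp
      obtain ⟨hn, hz, hs⟩ := hf y₁ hmem.1 y₂ hmem.2.1
      have he : toSched Y₁ Y₂ f y₁ y₂ y = f ⟨(y₁, y₂, y), hp⟩ := toSched_apply f hp
      show f ⟨(y₁, y₂, y), hp⟩ ≤ 1
      by_cases hy : y ∈ IntF y₁ y₂
      · rw [← he, ← hs]
        exact Finset.single_le_sum (fun i _ => hn i) hy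
      · rw [← he, hz y hy]; norm_num
  have hKcpt : IsCompact K := IsCompact.of_isClosed_subset isCompact_Icc hKc hKsub
  -- K is nonempty: uniform scheduler
  have hKne : K.Nonempty := by
    refine ⟨fun p => if p.1.2.2 ∈ IntF p.1.1 p.1.2.1
      then ((IntF p.1.1 p.1.2.1).card : ℝ)⁻¹ else 0, ?_⟩
    intro y₁ h₁ y₂ h₂
    have hcard : ((IntF y₁ y₂).card : ℝ) ≠ 0 := by
      exact_mod_cast (Finset.card_pos.mpr (IntF_nonempty y₁ y₂)).ne'
    refine ⟨?_, ?_, ?_⟩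
    · intro y
      by_cases hp : (y₁, y₂, y) ∈ TIdx Y₁ Y₂
      · rw [toSched_apply _ hp]
        show (0 : ℝ) ≤ if y ∈ IntF y₁ y₂ then ((IntF y₁ y₂).card : ℝ)⁻¹ else 0
        by_cases hy : y ∈ IntF y₁ y₂
        · rw [if_pos hy]; positivity
        · rw [if_neg hy]
      · rw [toSched, dif_neg hp]
    · intro y hy
      by_cases hp : (y₁, y₂, y) ∈ TIdx Y₁ Y₂
      · rw [toSched_apply _ hp]
        show (if y ∈ IntF y₁ y₂ then ((IntF y₁ y₂).card : ℝ)⁻¹ else 0) = 0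
        rw [if_neg hy]
      · rw [toSched, dif_neg hp]
    · have hval : ∀ y ∈ IntF y₁ y₂,
          toSched Y₁ Y₂ (fun p => if p.1.2.2 ∈ IntF p.1.1 p.1.2.1
            then ((IntF p.1.1 p.1.2.1).card : ℝ)⁻¹ else 0) y₁ y₂ y
            = ((IntF y₁ y₂).card : ℝ)⁻¹ := by
        intro y hy
        have hp : (y₁, y₂, y) ∈ TIdx Y₁ Y₂ :=
          mem_TIdx.mpr ⟨h₁, h₂, mem_IntSet h₁ h₂ hy⟩
        rw [toSched_apply _ hp]
        show (if y ∈ IntF y₁ y₂ then ((IntF y₁ y₂).card : ℝ)⁻¹ else 0) = _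
        rw [if_pos hy]
      rw [Finset.sum_congr rfl hval, Finset.sum_const, nsmul_eq_mul,
        mul_inv_cancel₀ hcard]
  -- extract the minimiser
  obtain ⟨fstar, hfK, hmin⟩ := hKcpt.exists_isMinOn hKne hΦc.continuousOn
  refine ⟨toSched Y₁ Y₂ fstar, hfK, ?_⟩
  intro S hS
  -- embed the competitor scheduler into the compact set
  set fS : ↥(TIdx Y₁ Y₂) → ℝ := fun p => S p.1.1 p.1.2.1 p.1.2.2 with hfSdef
  have hfSK : fS ∈ K := by
    intro y₁ h₁ y₂ h₂
    obtain ⟨hn, hz, hs⟩ := hS y₁ h₁ y₂ h₂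
    refine ⟨?_, ?_, ?_⟩
    · intro y
      simp only [toSched]
      split
      · exact hn y
      · exact le_refl _
    · intro y hy
      simp only [toSched]
      split
      · exact hz y hy
      · rfl
    · have hval : ∀ y ∈ IntF y₁ y₂, toSched Y₁ Y₂ fS y₁ y₂ y = S y₁ y₂ y := by
        intro y hy
        exact toSched_apply fS (mem_TIdx.mpr ⟨h₁, h₂, mem_IntSet h₁ h₂ hy⟩)
      rw [Finset.sum_congr rfl hval, hs]
  -- the embedded scheduler yields the same observed channel
  have hcasc : Fcascade (IntSet Y₁ Y₂) (Comp Y₁ Y₂ C₁ C₂ (toSched Y₁ Y₂ fS)) Obs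
      = Fcascade (IntSet Y₁ Y₂) (Comp Y₁ Y₂ C₁ C₂ S) Obs := by
    funext x z
    unfold Fcascade
    refine Finset.sum_congr rfl fun y hy => ?_
    congr 1
    unfold Comp
    refine Finset.sum_congr rfl fun y₁ h₁ => Finset.sum_congr rfl fun y₂ h₂ => ?_
    congr 1
    exact toSched_apply fS (mem_TIdx.mpr ⟨h₁, h₂, hy⟩)
  have hV : FVpost π Finset.univ
        (Fcascade (IntSet Y₁ Y₂) (Comp Y₁ Y₂ C₁ C₂ (toSched Y₁ Y₂ fstar)) Obs) ≤
      FVpost π Finset.univ (Fcascade (IntSet Y₁ Y₂) (Comp Y₁ Y₂ C₁ C₂ S) Obs) := by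
    have h1 : Φ fstar ≤ Φ fS := hmin hfSK
    rw [hΦdef] at h1
    dsimp only at h1
    rwa [hcasc] at h1
  have hpos : 0 < FVpost π Finset.univ
      (Fcascade (IntSet Y₁ Y₂) (Comp Y₁ Y₂ C₁ C₂ (toSched Y₁ Y₂ fstar)) Obs) :=
    FVpost_pos Y₁ Y₂ C₁ C₂ hC₁ hC₂ π hπ Obs hObs _ hfK
  refine ⟨?_, hV⟩
  unfold FMEL
  apply sub_le_sub_right
  exact Real.logb_le_logb_of_le one_lt_two hpos hV
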